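/- arXiv:1902.06369 — 3 statements merged into one kernel-verified Lean document; each statement's English description precedes it below -/
import Mathlib

section
/- Let (V, ω) be a symplectic vector space with a symplectic linear action of a finite group G, and let L be a G-invariant Lagrangian subspace of V. Then there exists a G-invariant Lagrangian subspace N of V with V = L ⊕ N. -/
/-- A subspace `L` of a vector space with a bilinear form `ω` is Lagrangian if `ω`
vanishes identically on `L × L` and `dim L = (dim V)/2`. -/
def IsLagrangian {V : Type*} [AddCommGroup V] [Module ℝ V]
    (ω : V →ₗ[ℝ] V →ₗ[ℝ] ℝ) (L : Submodule ℝ V) : Prop :=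
  (∀ v ∈ L, ∀ w ∈ L, ω v w = 0) ∧
  2 * Module.finrank ℝ L = Module.finrank ℝ V

/-!
Averaging over `G` (Maschke) gives a `G`-invariant complement `K` of `L`. Since `L` is
Lagrangian, `ω` identifies `L` with the dual of `K`, so there is a unique linear `φ : K → L`
with `ω (φ k) k' = -ω k k' / 2` for all `k, k' ∈ K`; the factor `1/2` makes the graph of `φ`
isotropic, and it is complementary to `L` of half dimension. The graph is built from `ω`, `L`
and `K` alone, so it is `G`-invariant.
-/

open Module LinearMap Submodule

theorem Subrepresentation.isCompl_toSubmodule {k G V : Type*} [Semiring k] [Monoid G]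
    [AddCommMonoid V] [Module k V] {ρ : Representation k G V} {σ τ : Subrepresentation ρ}
    (h : IsCompl σ τ) : IsCompl σ.toSubmodule τ.toSubmodule := by
  constructor
  · rw [disjoint_iff, ← Subrepresentation.toSubmodule_inf, h.inf_eq_bot]; rfl
  · rw [codisjoint_iff, ← Subrepresentation.toSubmodule_sup, h.sup_eq_top]; rfl

theorem Representation.exists_invariant_isCompl {k G V : Type*} [Field k] [Group G] [Finite G]
    [NeZero (Nat.card G : k)] [AddCommGroup V] [Module k V] (ρ : Representation k G V)
    (L : Submodule k V) (hL : ∀ g, ∀ v ∈ L, ρ g v ∈ L) :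
    ∃ K : Submodule k V, (∀ g, ∀ v ∈ K, ρ g v ∈ K) ∧ IsCompl L K := by
  obtain ⟨τ, hτ⟩ := exists_isCompl (⟨L, fun g _ hv ↦ hL g _ hv⟩ : Subrepresentation ρ)
  exact ⟨τ.toSubmodule, fun g _ hv ↦ τ.apply_mem_toSubmodule g hv,
    Subrepresentation.isCompl_toSubmodule hτ⟩

theorem Submodule.commute_projection {R E : Type*} [Ring R] [AddCommGroup E] [Module R E]
    {p q : Submodule R E} (hpq : IsCompl p q) {f : E →ₗ[R] E} (hp : ∀ v ∈ p, f v ∈ p)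
    (hq : ∀ v ∈ q, f v ∈ q) : Commute (p.projection q hpq) f :=
  (isIdempotentElem_projection hpq).commute_iff.mpr
    ⟨by rw [range_projection]; exact hp, by rw [ker_projection]; exact hq⟩

section LagrangianGraph

variable {V : Type*} [AddCommGroup V] [Module ℝ V] {ω : V →ₗ[ℝ] V →ₗ[ℝ] ℝ}
  {L K : Submodule ℝ V}

/-- The graph `{k + φ k | k ∈ K}` of the linear map `φ : K → L` determined by
`ω (φ k) k' = -ω k k' / 2` for `k' ∈ K`: writing `v = l + k`, membership says
`ω (l + k / 2) k' = 0`. The kernel description avoids constructing `φ`. -/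
noncomputable def lagrangianGraph (ω : V →ₗ[ℝ] V →ₗ[ℝ] ℝ) (hKL : IsCompl K L) : Submodule ℝ V :=
  ker (ω.compl₁₂ (LinearMap.id - (1 / 2 : ℝ) • K.projection L hKL) K.subtype)

theorem mem_lagrangianGraph (hKL : IsCompl K L) {v : V} :
    v ∈ lagrangianGraph ω hKL ↔
      ∀ k ∈ K, ω (v - (1 / 2 : ℝ) • K.projection L hKL v) k = 0 := by
  simp [lagrangianGraph, LinearMap.ext_iff]

theorem lagrangianGraph_isotropic (hω : ω.IsAlt) (hKL : IsCompl K L)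
    (hL : ∀ v ∈ L, ∀ w ∈ L, ω v w = 0) :
    ∀ v ∈ lagrangianGraph ω hKL, ∀ w ∈ lagrangianGraph ω hKL, ω v w = 0 := by
  intro v hv w hw
  let P := K.projection L hKL
  have hv' := (mem_lagrangianGraph hKL).mp hv (P w) (projection_apply_mem _ _)
  have hw' := (mem_lagrangianGraph hKL).mp hw (P v) (projection_apply_mem _ _)
  have hLL := hL _ (sub_projection_mem hKL v) _ (sub_projection_mem hKL w)
  -- with `l = v - P v` and `l' = w - P w`, `ω v w = ω l (P w) + ω (P v) l' + ω (P v) (P w)`,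
  -- and the first two terms are both `-ω (P v) (P w) / 2`
  have hskewK := hω.neg (P v) (P w)
  have hskew := hω.neg w (P v)
  simp only [map_sub, map_smul, LinearMap.sub_apply, LinearMap.smul_apply, smul_eq_mul]
    at hv' hw' hLL
  linarith

theorem disjoint_lagrangianGraph (hnd : ω.SeparatingLeft) (hKL : IsCompl K L)
    (hL : ∀ v ∈ L, ∀ w ∈ L, ω v w = 0) : Disjoint L (lagrangianGraph ω hKL) := by
  rw [disjoint_iff, eq_bot_iff]
  rintro v ⟨hvL, hvN⟩
  have hPv : K.projection L hKL v = 0 := (projection_apply_eq_zero_iff _).mpr hvL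
  have hvK : ∀ k ∈ K, ω v k = 0 := by
    simpa [hPv] using (mem_lagrangianGraph hKL).mp hvN
  refine hnd v fun w ↦ ?_
  rw [← projection_add_projection_eq_self hKL w, map_add, hL v hvL _ (projection_apply_mem _ _),
    hvK _ (projection_apply_mem _ _), add_zero]

theorem finrank_le_finrank_lagrangianGraph [FiniteDimensional ℝ V] (hKL : IsCompl K L) :
    finrank ℝ L ≤ finrank ℝ (lagrangianGraph ω hKL) := by
  let Ψ := ω.compl₁₂ (LinearMap.id - (1 / 2 : ℝ) • K.projection L hKL) K.subtype
  have hrank := finrank_range_add_finrank_ker Ψ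
  have hrange : finrank ℝ (range Ψ) ≤ finrank ℝ K :=
    (Submodule.finrank_le _).trans_eq Subspace.dual_finrank_eq
  have hsum := finrank_add_eq_of_isCompl hKL
  change finrank ℝ L ≤ finrank ℝ (ker Ψ)
  omega

theorem finrank_lagrangianGraph [FiniteDimensional ℝ V] (hnd : ω.SeparatingLeft)
    (hKL : IsCompl K L) (hL : IsLagrangian ω L) :
    finrank ℝ (lagrangianGraph ω hKL) = finrank ℝ L := by
  have hle := finrank_add_finrank_le_of_disjoint (disjoint_lagrangianGraph hnd hKL hL.1)
  have hge := finrank_le_finrank_lagrangianGraph (ω := ω) hKL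
  have hdim := hL.2
  omega

theorem isLagrangian_lagrangianGraph [FiniteDimensional ℝ V] (hω : ω.IsAlt)
    (hnd : ω.SeparatingLeft) (hKL : IsCompl K L) (hL : IsLagrangian ω L) :
    IsLagrangian ω (lagrangianGraph ω hKL) :=
  ⟨lagrangianGraph_isotropic hω hKL hL.1, by rw [finrank_lagrangianGraph hnd hKL hL, hL.2]⟩

theorem isCompl_lagrangianGraph [FiniteDimensional ℝ V] (hnd : ω.SeparatingLeft)
    (hKL : IsCompl K L) (hL : IsLagrangian ω L) : IsCompl L (lagrangianGraph ω hKL) := by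
  refine (isCompl_iff_disjoint _ _ ?_).mpr (disjoint_lagrangianGraph hnd hKL hL.1)
  rw [finrank_lagrangianGraph hnd hKL hL, ← hL.2]
  omega

theorem apply_mem_lagrangianGraph (hKL : IsCompl K L) (e : V ≃ₗ[ℝ] V)
    (he : ∀ v w, ω (e v) (e w) = ω v w) (heL : ∀ v ∈ L, e v ∈ L) (heK : ∀ v ∈ K, e v ∈ K)
    (heK_symm : ∀ v ∈ K, e.symm v ∈ K) {v : V} (hv : v ∈ lagrangianGraph ω hKL) :
    e v ∈ lagrangianGraph ω hKL := by
  have hcomm : K.projection L hKL (e v) = e (K.projection L hKL v) :=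
    LinearMap.congr_fun (commute_projection hKL (f := e.toLinearMap) heK heL).eq v
  rw [mem_lagrangianGraph] at hv ⊢
  intro k hk
  rw [hcomm, ← e.apply_symm_apply k, ← map_smul, ← map_sub, he]
  exact hv _ (heK_symm k hk)

end LagrangianGraph

/-- A `G`-invariant Lagrangian subspace of a symplectic vector space
with a symplectic linear action of a finite group `G` admits a `G`-invariant
Lagrangian complement. -/
theorem invariant_lagrangian_complement
    {V : Type*} [AddCommGroup V] [Module ℝ V] [FiniteDimensional ℝ V]
    (ω : V →ₗ[ℝ] V →ₗ[ℝ] ℝ)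
    (halt : ∀ v, ω v v = 0)
    (hnd : ∀ v, (∀ w, ω v w = 0) → v = 0)
    {G : Type*} [Group G] [Finite G]
    (ρ : G →* (V ≃ₗ[ℝ] V))
    (hsymp : ∀ (g : G) (v w : V), ω (ρ g v) (ρ g w) = ω v w)
    (L : Submodule ℝ V) (hL : IsLagrangian ω L)
    (hLinv : ∀ (g : G), ∀ v ∈ L, ρ g v ∈ L) :
    ∃ N : Submodule ℝ V, IsLagrangian ω N ∧
      (∀ (g : G), ∀ v ∈ N, ρ g v ∈ N) ∧ IsCompl L N := by
  obtain ⟨K, hKinv, hLK⟩ :=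
    Representation.exists_invariant_isCompl
      (LinearEquiv.automorphismGroup.toLinearMapMonoidHom.comp ρ) L hLinv
  refine ⟨lagrangianGraph ω hLK.symm, isLagrangian_lagrangianGraph halt hnd hLK.symm hL,
    fun g v hv ↦ ?_, isCompl_lagrangianGraph hnd hLK.symm hL⟩
  exact apply_mem_lagrangianGraph hLK.symm (ρ g) (hsymp g) (hLinv g) (hKinv g)
    (fun k hk ↦ by simpa using hKinv g⁻¹ k hk) hv
end

section
/- Let (V, ω) be a symplectic vector space with a symplectic linear action of a finite group G, and let L₁, L₂ be G-invariant Lagrangian subspaces with L₁ ∩ L₂ = {0}. Then there exists a G-invariant Lagrangian subspace N of V with V = L₁ ⊕ N and V = L₂ ⊕ N. -/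
set_option maxHeartbeats 1000000 in
/-- Two transverse `G`-invariant Lagrangian subspaces of a symplectic
vector space with a symplectic linear action of a finite group `G` admit a common
`G`-invariant Lagrangian complement. -/
theorem invariant_common_lagrangian_complement_of_transverse
    {V : Type*} [AddCommGroup V] [Module ℝ V] [FiniteDimensional ℝ V]
    (ω : V →ₗ[ℝ] V →ₗ[ℝ] ℝ)
    (halt : ∀ v, ω v v = 0)
    (hnd : ∀ v, (∀ w, ω v w = 0) → v = 0)
    {G : Type*} [Group G] [Finite G]
    (ρ : G →* (V ≃ₗ[ℝ] V))
    (hsymp : ∀ (g : G) (v w : V), ω (ρ g v) (ρ g w) = ω v w)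
    (L₁ L₂ : Submodule ℝ V)
    (hL₁ : IsLagrangian ω L₁) (hL₂ : IsLagrangian ω L₂)
    (hL₁inv : ∀ (g : G), ∀ v ∈ L₁, ρ g v ∈ L₁)
    (hL₂inv : ∀ (g : G), ∀ v ∈ L₂, ρ g v ∈ L₂)
    (htrans : L₁ ⊓ L₂ = ⊥) :
    ∃ N : Submodule ℝ V, IsLagrangian ω N ∧
      (∀ (g : G), ∀ v ∈ N, ρ g v ∈ N) ∧ IsCompl L₁ N ∧ IsCompl L₂ N := by
  classical
  have := Fintype.ofFinite G
  -- skew symmetry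
  have hskew : ∀ v w, ω w v = -ω v w := by
    intro v w
    have h := halt (v + w)
    simp only [map_add, LinearMap.add_apply] at h
    rw [halt v, halt w] at h
    linarith
  -- dimensions
  have hdim12 : Module.finrank ℝ L₁ = Module.finrank ℝ L₂ := by
    have := hL₁.2; have := hL₂.2; omega
  have hsum : Module.finrank ℝ L₁ + Module.finrank ℝ L₂ = Module.finrank ℝ V := by
    have := hL₁.2; omega
  have hsup : L₁ ⊔ L₂ = ⊤ := by
    apply Submodule.eq_top_of_finrank_eq
    have h := Submodule.finrank_sup_add_finrank_inf_eq L₁ L₂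
    rw [htrans] at h
    simp only [finrank_bot, add_zero] at h
    omega
  -- restricted actions
  set σ₁ : G → L₁ →ₗ[ℝ] L₁ := fun g => ((ρ g : V →ₗ[ℝ] V)).restrict (hL₁inv g) with hσ₁
  set σ₂ : G → L₂ →ₗ[ℝ] L₂ := fun g => ((ρ g : V →ₗ[ℝ] V)).restrict (hL₂inv g) with hσ₂
  have hσ₁coe : ∀ (g : G) (v : L₁), (σ₁ g v : V) = ρ g (v : V) := fun g v => rfl
  have hσ₂coe : ∀ (g : G) (w : L₂), (σ₂ g w : V) = ρ g (w : V) := fun g w => rfl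
  have hσ₁mul : ∀ (g h : G) (v : L₁), σ₁ g (σ₁ h v) = σ₁ (g * h) v := by
    intro g h v
    apply Subtype.ext
    rw [hσ₁coe, hσ₁coe, hσ₁coe, map_mul]
    rfl
  have hσ₁one : ∀ (v : L₁), σ₁ 1 v = v := by
    intro v
    apply Subtype.ext
    rw [hσ₁coe, map_one]
    rfl
  -- base positive bilinear form on L₁
  set b := Module.finBasis ℝ L₁ with hb
  set B₀ : L₁ →ₗ[ℝ] L₁ →ₗ[ℝ] ℝ := ∑ i, (b.coord i).smulRight (b.coord i) with hB₀
  have hB₀apply : ∀ v w : L₁, B₀ v w = ∑ i, b.coord i v * b.coord i w := by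
    intro v w
    simp [hB₀, LinearMap.sum_apply, LinearMap.smulRight_apply, smul_eq_mul]
  have hB₀symm : ∀ v w, B₀ v w = B₀ w v := by
    intro v w; rw [hB₀apply, hB₀apply]; exact Finset.sum_congr rfl fun i _ => mul_comm _ _
  have hB₀nonneg : ∀ v, 0 ≤ B₀ v v := by
    intro v; rw [hB₀apply]; exact Finset.sum_nonneg fun i _ => mul_self_nonneg _
  have hB₀def : ∀ v, B₀ v v = 0 → v = 0 := by
    intro v hv
    rw [hB₀apply] at hv
    have h := (Finset.sum_eq_zero_iff_of_nonneg (fun i _ => mul_self_nonneg (b.coord i v))).mp hv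
    have hz : ∀ i, b.repr v i = 0 := by
      intro i
      have := h i (Finset.mem_univ i)
      have : b.coord i v = 0 := by nlinarith [this]
      simpa [Module.Basis.coord_apply] using this
    have : b.repr v = 0 := Finsupp.ext hz
    simpa using congrArg b.repr.symm this
  -- averaged form
  set B : L₁ →ₗ[ℝ] L₁ →ₗ[ℝ] ℝ := ∑ g : G, B₀.compl₁₂ (σ₁ g) (σ₁ g) with hB
  have hBapply : ∀ v w, B v w = ∑ g : G, B₀ (σ₁ g v) (σ₁ g w) := by
    intro v w
    simp [hB, LinearMap.sum_apply, LinearMap.compl₁₂_apply]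
  have hBsymm : ∀ v w, B v w = B w v := by
    intro v w; rw [hBapply, hBapply]
    exact Finset.sum_congr rfl fun g _ => hB₀symm _ _
  have hBdef : ∀ v, B v v = 0 → v = 0 := by
    intro v hv
    rw [hBapply] at hv
    have h := (Finset.sum_eq_zero_iff_of_nonneg (fun g _ => hB₀nonneg (σ₁ g v))).mp hv
    have h1 := h 1 (Finset.mem_univ 1)
    rw [hσ₁one] at h1
    exact hB₀def v h1
  have hBinv : ∀ (g : G) (v w : L₁), B (σ₁ g v) (σ₁ g w) = B v w := by
    intro g v w
    rw [hBapply, hBapply]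
    exact Fintype.sum_equiv (Equiv.mulRight g) _ _
      (fun h => by simp only [Equiv.coe_mulRight]; rw [hσ₁mul, hσ₁mul])
  -- the pairing Q : L₂ → Dual L₁, Q w u = ω u w
  set Q : L₂ →ₗ[ℝ] (L₁ →ₗ[ℝ] ℝ) := (ω.flip.domRestrict L₂).compl₂ L₁.subtype with hQdef
  have hQapply : ∀ (w : L₂) (u : L₁), Q w u = ω u w := fun w u => rfl
  have hωtotal : ∀ x : V, ∀ w : L₂, (∀ u : L₁, ω (u : V) (w : V) = 0) → ω x w = 0 := by
    intro x w hw
    have hx : x ∈ L₁ ⊔ L₂ := by rw [hsup]; trivial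
    obtain ⟨a, ha, c, hc, rfl⟩ := Submodule.mem_sup.mp hx
    rw [map_add, LinearMap.add_apply]
    rw [hw ⟨a, ha⟩, hL₂.1 c hc w w.2]
    ring
  have hQinj : Function.Injective Q := by
    rw [injective_iff_map_eq_zero]
    intro w hw
    have hw' : ∀ u : L₁, ω (u : V) (w : V) = 0 := by
      intro u
      have := congrArg (fun f => f u) hw
      simpa [hQapply] using this
    have : ∀ x : V, ω (w : V) x = 0 := by
      intro x
      rw [hskew]
      rw [hωtotal x w hw']
      ring
    exact Subtype.ext (hnd _ this)
  have hQbij : Function.Bijective Q := by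
    refine ⟨hQinj, ?_⟩
    have hrank : Module.finrank ℝ L₂ = Module.finrank ℝ (L₁ →ₗ[ℝ] ℝ) := by
      rw [← hdim12]
      simp [Module.finrank_linearMap]
    exact (LinearMap.injective_iff_surjective_of_finrank_eq_finrank hrank).mp hQinj
  set eQ := LinearEquiv.ofBijective Q hQbij with heQ
  set φ : L₁ →ₗ[ℝ] L₂ := (eQ.symm : (L₁ →ₗ[ℝ] ℝ) →ₗ[ℝ] L₂) ∘ₗ B with hφdef
  have hQφ : ∀ v : L₁, Q (φ v) = B v := by
    intro v
    show eQ (eQ.symm (B v)) = B v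
    exact eQ.apply_symm_apply _
  have hφapply : ∀ v u : L₁, ω (u : V) (φ v : V) = B v u := by
    intro v u
    rw [← hQapply]
    rw [hQφ]
  have hφinj : Function.Injective φ := by
    rw [injective_iff_map_eq_zero]
    intro v hv
    apply hBdef
    have := hQφ v
    rw [hv, map_zero] at this
    rw [← this]
    rfl
  -- equivariance of φ
  have hφequiv : ∀ (g : G) (v : L₁), φ (σ₁ g v) = σ₂ g (φ v) := by
    intro g v
    apply hQinj
    apply LinearMap.ext
    intro u
    rw [hQapply, hQapply, hφapply]
    have h1 : B (σ₁ g v) u = B v (σ₁ g⁻¹ u) := by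
      conv_lhs => rw [show u = σ₁ g (σ₁ g⁻¹ u) by rw [hσ₁mul]; rw [mul_inv_cancel]; exact (hσ₁one u).symm]
      rw [hBinv]
    rw [h1]
    have h2 : ω (u : V) ((σ₂ g (φ v) : L₂) : V) = ω ((σ₁ g⁻¹ u : L₁) : V) ((φ v : L₂) : V) := by
      rw [hσ₂coe, hσ₁coe]
      rw [← hsymp g ((ρ g⁻¹) (u : V)) ((φ v : L₂) : V)]
      congr 1
      have : ρ g ((ρ g⁻¹) (u : V)) = ((ρ g) * (ρ g⁻¹)) (u : V) := rfl
      rw [this, ← map_mul, mul_inv_cancel, map_one]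
      rfl
    rw [h2, hφapply]
  -- define N
  set f : L₁ →ₗ[ℝ] V := L₁.subtype + L₂.subtype ∘ₗ φ with hf
  have hfapply : ∀ v : L₁, f v = (v : V) + (φ v : V) := fun v => rfl
  set N := LinearMap.range f with hN
  have hmemN : ∀ x, x ∈ N ↔ ∃ v : L₁, (v : V) + (φ v : V) = x := by
    intro x
    simp [hN, LinearMap.mem_range, hfapply]
  have hfinj : Function.Injective f := by
    rw [injective_iff_map_eq_zero]
    intro v hv
    rw [hfapply] at hv
    have hmem : (v : V) ∈ L₁ ⊓ L₂ := by
      constructor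
      · exact v.2
      · have : (v : V) = -(φ v : V) := eq_neg_of_add_eq_zero_left hv
        rw [this]
        exact neg_mem (φ v).2
    rw [htrans] at hmem
    exact Subtype.ext hmem
  have hrankN : Module.finrank ℝ N = Module.finrank ℝ L₁ :=
    LinearMap.finrank_range_of_inj hfinj
  refine ⟨N, ⟨?_, ?_⟩, ?_, ?_, ?_⟩
  · -- isotropic
    intro x hx y hy
    obtain ⟨v, rfl⟩ := (hmemN x).mp hx
    obtain ⟨w, rfl⟩ := (hmemN y).mp hy
    simp only [map_add, LinearMap.add_apply]
    rw [hL₁.1 v v.2 w w.2, hφapply w v, hskew ((w : V)) ((φ v : L₂) : V), hφapply v w,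
      hL₂.1 (φ v) (φ v).2 (φ w) (φ w).2]
    rw [hBsymm]
    ring
  · rw [hrankN]; exact hL₁.2
  · -- G-invariance
    intro g x hx
    obtain ⟨v, rfl⟩ := (hmemN x).mp hx
    rw [hmemN]
    refine ⟨σ₁ g v, ?_⟩
    rw [hφequiv, hσ₁coe, hσ₂coe, map_add]
  · -- IsCompl L₁ N
    have hdisj : Disjoint L₁ N := by
      rw [Submodule.disjoint_def]
      intro x hx1 hxN
      obtain ⟨v, hv⟩ := (hmemN x).mp hxN
      have hφmem : (φ v : V) ∈ L₁ ⊓ L₂ := by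
        constructor
        · have : (φ v : V) = x - (v : V) := eq_sub_of_add_eq' hv
          rw [this]; exact sub_mem hx1 v.2
        · exact (φ v).2
      rw [htrans] at hφmem
      have hφ0 : φ v = 0 := Subtype.ext hφmem
      have hv0 : v = 0 := hφinj (by rw [hφ0, map_zero])
      rw [← hv, hv0]
      simp
    refine ⟨hdisj, ?_⟩
    rw [codisjoint_iff]
    apply Submodule.eq_top_of_finrank_eq
    have h := Submodule.finrank_sup_add_finrank_inf_eq L₁ N
    rw [disjoint_iff.mp hdisj] at h
    simp only [finrank_bot, add_zero] at h
    rw [hrankN] at h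
    have := hL₁.2
    omega
  · -- IsCompl L₂ N
    have hdisj : Disjoint L₂ N := by
      rw [Submodule.disjoint_def]
      intro x hx2 hxN
      obtain ⟨v, hv⟩ := (hmemN x).mp hxN
      have hvmem : (v : V) ∈ L₁ ⊓ L₂ := by
        constructor
        · exact v.2
        · have : (v : V) = x - (φ v : V) := eq_sub_of_add_eq hv
          rw [this]; exact sub_mem hx2 (φ v).2
      rw [htrans] at hvmem
      have hv0 : v = 0 := Subtype.ext hvmem
      rw [← hv, hv0]
      simp
    refine ⟨hdisj, ?_⟩
    rw [codisjoint_iff]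
    apply Submodule.eq_top_of_finrank_eq
    have h := Submodule.finrank_sup_add_finrank_inf_eq L₂ N
    rw [disjoint_iff.mp hdisj] at h
    simp only [finrank_bot, add_zero] at h
    rw [hrankN, ← hdim12] at h
    have := hL₁.2
    omega
end

section
/- Let A be a set, k ≥ 1 an integer, and let C_i : A → A and R_i : A → A for i ∈ ℤ/kℤ be maps satisfying the commutation relations R_{i−1} ∘ C_i = C_{i+1} ∘ R_i for all i ∈ ℤ/kℤ, together with R_{k−1} ∘ R_{k−2} ∘ ⋯ ∘ R_1 ∘ R_0 = id. Then (C_1 ∘ R_0)^k = C_1 ∘ C_2 ∘ ⋯ ∘ C_{k−1} ∘ C_0, where all indices are taken modulo k (so that C_k = C_0). -/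
/-- `compDesc F n = F (n-1) ∘ ⋯ ∘ F 1 ∘ F 0` (with `F 0` applied first). -/
def compDesc {A : Type*} (F : ℕ → A → A) : ℕ → A → A
  | 0 => id
  | n + 1 => F n ∘ compDesc F n

/-- `compAsc F n = F 1 ∘ F 2 ∘ ⋯ ∘ F n` (with `F n` applied first). -/
def compAsc {A : Type*} (F : ℕ → A → A) : ℕ → A → A
  | 0 => id
  | n + 1 => compAsc F n ∘ F (n + 1)

/-- Given maps `C_i, R_i : A → A` indexed by `ℤ/kℤ` satisfying
`R_{i−1} ∘ C_i = C_{i+1} ∘ R_i` for all `i` and `R_{k−1} ∘ ⋯ ∘ R_1 ∘ R_0 = id`,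
the `k`-fold iterate of `C_1 ∘ R_0` equals `C_1 ∘ C_2 ∘ ⋯ ∘ C_{k−1} ∘ C_0`
(indices mod `k`, with `C_0 = C_k` applied first). -/
theorem iterate_eq_continuation_composition
    {A : Type*} (k : ℕ) (hk : 1 ≤ k)
    (C R : ZMod k → A → A)
    (hcomm : ∀ i : ZMod k, R (i - 1) ∘ C i = C (i + 1) ∘ R i)
    (hR : compDesc (fun j : ℕ => R (j : ZMod k)) k = id) :
    (C 1 ∘ R 0)^[k] = compAsc (fun j : ℕ => C (j : ZMod k)) k := by
  have hcomm' : ∀ (i : ZMod k) (a : A), R (i - 1) (C i a) = C (i + 1) (R i a) :=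
    fun i a => congrFun (hcomm i) a
  -- key: commute `C 1` leftwards past `R (n-1) ∘ ⋯ ∘ R 0`, shifting all R-indices by 1
  have key : ∀ (n : ℕ) (a : A),
      compDesc (fun j : ℕ => R (j : ZMod k)) n (C 1 a) =
      C ((n : ZMod k) + 1) (compDesc (fun j : ℕ => R ((j : ZMod k) + 1)) n a) := by
    intro n
    induction n with
    | zero => intro a; simp [compDesc]
    | succ n ih =>
      intro a
      simp only [compDesc, Function.comp_apply]
      rw [ih]
      have h := hcomm' ((n : ZMod k) + 1)
        (compDesc (fun j : ℕ => R ((j : ZMod k) + 1)) n a)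
      simp only [add_sub_cancel_right] at h
      rw [h]
      push_cast
      ring_nf
  -- shift lemma: absorbing `R 0` on the right
  have shift : ∀ (n : ℕ) (a : A),
      compDesc (fun j : ℕ => R ((j : ZMod k) + 1)) n (R 0 a) =
      compDesc (fun j : ℕ => R (j : ZMod k)) (n + 1) a := by
    intro n
    induction n with
    | zero => intro a; simp [compDesc]
    | succ n ih =>
      intro a
      simp only [compDesc, Function.comp_apply] at ih ⊢
      rw [ih]
      push_cast
      ring_nf
  -- main telescoping identity
  have main : ∀ (n : ℕ) (a : A),
      (C 1 ∘ R 0)^[n] a =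
      compAsc (fun j : ℕ => C (j : ZMod k)) n
        (compDesc (fun j : ℕ => R (j : ZMod k)) n a) := by
    intro n
    induction n with
    | zero => intro a; simp [compAsc, compDesc]
    | succ n ih =>
      intro a
      rw [Function.iterate_succ_apply]
      simp only [Function.comp_apply]
      rw [ih, key, shift]
      simp only [compAsc, Function.comp_apply]
      push_cast
      ring_nf
  funext a
  rw [main k a, hR]
  rfl
end
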